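/- A family of vectors v^1, ..., v^{2^n} in (ℤ/4ℤ)^n gives a cube tiling of the torus (ℤ/4ℤ)^n if and only if it forms a clique of size 2^n in the Keller graph G_n, whose vertices are the elements of (ℤ/4ℤ)^n and where v, w are adjacent iff v ≠ w and there exists a coordinate i with v_i - w_i = 2. -/

import Mathlib

/-!
A cube `v + {0,1}^n` is the product of the two-point sets `{v i, v i + 1}`, so two cubes are
disjoint iff some pair of factors is, and in `ℤ/4ℤ` the sets `{a, a + 1}` and `{b, b + 1}` are
disjoint iff `a - b = 2`. Hence pairwise disjointness of the cubes is exactly the clique condition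
in `G_n`, and a packing of `2^n` cubes of `2^n` points each fills the `4^n` points of the torus.
-/

/-- The cube `v + {0,1}^n` in the discrete torus `(ℤ/4ℤ)^n`. -/
def cube {n : ℕ} (v : Fin n → ZMod 4) : Set (Fin n → ZMod 4) :=
  {x | ∀ i, x i = v i ∨ x i = v i + 1}

/-- The Keller graph `G_n` on vertex set `(ℤ/4ℤ)^n`. -/
def kellerGraph (n : ℕ) : SimpleGraph (Fin n → ZMod 4) where
  Adj v w := v ≠ w ∧ ∃ i, v i - w i = 2
  symm := by
    constructor
    rintro v w ⟨hne, i, hi⟩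
    refine ⟨hne.symm, i, ?_⟩
    have : w i - v i = -(v i - w i) := by ring
    rw [this, hi]; decide
  loopless := by constructor; rintro v ⟨hne, -⟩; exact hne rfl

open Finset

theorem Finset.biUnion_eq_univ_of_pairwiseDisjoint {ι α : Type*} [Fintype α] [DecidableEq α]
    {s : Finset ι} {f : ι → Finset α} (hf : (s : Set ι).PairwiseDisjoint f)
    (hcard : ∑ i ∈ s, #(f i) = Fintype.card α) : s.biUnion f = univ :=
  eq_univ_of_card _ (by rw [card_biUnion hf, hcard])

namespace ZMod4

theorem card_pair_add_one : ∀ a : ZMod 4, #{a, a + 1} = 2 := by decide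

theorem disjoint_pair_iff (a b : ZMod 4) :
    Disjoint ({a, a + 1} : Set (ZMod 4)) {b, b + 1} ↔ a - b = 2 := by
  rw [← coe_pair, ← coe_pair, disjoint_coe]
  revert a b
  decide

end ZMod4

section Cube

variable {n : ℕ}

theorem cube_eq_pi (v : Fin n → ZMod 4) : cube v = Set.univ.pi fun i => {v i, v i + 1} := by
  ext x
  simp [cube]

theorem disjoint_cube_iff {v w : Fin n → ZMod 4} :
    Disjoint (cube v) (cube w) ↔ ∃ i, v i - w i = 2 := by
  simp only [cube_eq_pi, Set.disjoint_univ_pi, ZMod4.disjoint_pair_iff]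

theorem kellerGraph_adj_iff {v w : Fin n → ZMod 4} :
    (kellerGraph n).Adj v w ↔ v ≠ w ∧ Disjoint (cube v) (cube w) := by
  rw [disjoint_cube_iff]
  rfl

theorem isClique_kellerGraph_iff {s : Set (Fin n → ZMod 4)} :
    (kellerGraph n).IsClique s ↔ s.Pairwise fun v w => Disjoint (cube v) (cube w) := by
  refine forall₅_congr fun v _ w _ hvw => ?_
  rw [kellerGraph_adj_iff, and_iff_right hvw]

def cubeFinset (v : Fin n → ZMod 4) : Finset (Fin n → ZMod 4) :=
  Fintype.piFinset fun i => {v i, v i + 1}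

theorem coe_cubeFinset (v : Fin n → ZMod 4) : (cubeFinset v : Set (Fin n → ZMod 4)) = cube v := by
  simp [cubeFinset, cube_eq_pi]

theorem card_cubeFinset (v : Fin n → ZMod 4) : #(cubeFinset v) = 2 ^ n := by
  simp [cubeFinset, ZMod4.card_pair_add_one]

theorem iUnion_cube_eq_univ_of_pairwise_disjoint {P : Finset (Fin n → ZMod 4)}
    (hcard : #P = 2 ^ n)
    (hP : (P : Set (Fin n → ZMod 4)).Pairwise fun v w => Disjoint (cube v) (cube w)) :
    ⋃ v ∈ P, cube v = Set.univ := by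
  have hdisj : (P : Set (Fin n → ZMod 4)).PairwiseDisjoint cubeFinset := fun v hv w hw hvw => by
    rw [Function.onFun, ← disjoint_coe, coe_cubeFinset, coe_cubeFinset]
    exact hP hv hw hvw
  have hcover : P.biUnion cubeFinset = univ := by
    refine biUnion_eq_univ_of_pairwiseDisjoint hdisj ?_
    simp [card_cubeFinset, hcard, ← mul_pow]
  simpa [coe_cubeFinset] using congrArg ((↑) : Finset _ → Set (Fin n → ZMod 4)) hcover

end Cube

theorem tiling_iff_keller_clique {n : ℕ} (P : Finset (Fin n → ZMod 4))
    (hcard : P.card = 2 ^ n) :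
    ((P : Set (Fin n → ZMod 4)).Pairwise (fun v w => Disjoint (cube v) (cube w)) ∧
      (⋃ v ∈ P, cube v) = Set.univ) ↔
    (kellerGraph n).IsClique (P : Set (Fin n → ZMod 4)) := by
  rw [isClique_kellerGraph_iff]
  exact ⟨And.left, fun hP => ⟨hP, iUnion_cube_eq_univ_of_pairwise_disjoint hcard hP⟩⟩
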